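/- arXiv:math/0309411 — 2 statements merged into one kernel-verified Lean document; each statement's English description precedes it below -/
import Mathlib

section
/- For each integer k ≥ 1, the matrix M_k, regarded as a real matrix, has a real eigenvalue strictly greater than 1; that is, there exists a real number λ > 1 such that det(λ·I − M_k) = 0. -/
set_option maxHeartbeats 1600000


/-- The transition matrix `Mₖ`. Rows/columns are indexed by `Fin (4k+4)` with the labeling
`0 = a`, `1 = b`, `2 = c`, `3 = d`, `4 + i = xᵢ` (`0 ≤ i ≤ 2k-1`), `2k+4+i = yᵢ`
(`0 ≤ i ≤ 2k-1`). Nonzero entries: column `a` has `1` in rows `a, x₀, y₀`; column `b` has `1`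
in rows `b, x₀, y₀`; column `c` has `1` in row `d`; column `d` has `1` in rows `d, x₀, y₁`;
column `xᵢ` (`0 ≤ i ≤ 2k-2`) has `1` in row `xᵢ₊₁`; column `x_{2k-1}` has `1` in rows
`a, b, y₀`; column `yᵢ` (`0 ≤ i ≤ 2k-2`) has `1` in row `yᵢ₊₁`; column `y_{2k-1}` has `1`
in rows `b, c`. -/
def Mk (k : ℕ) : Matrix (Fin (4 * k + 4)) (Fin (4 * k + 4)) ℝ :=
  fun i j =>
    if j.val = 0 then (if i.val = 0 ∨ i.val = 4 ∨ i.val = 2 * k + 4 then 1 else 0)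
    else if j.val = 1 then (if i.val = 1 ∨ i.val = 4 ∨ i.val = 2 * k + 4 then 1 else 0)
    else if j.val = 2 then (if i.val = 3 then 1 else 0)
    else if j.val = 3 then (if i.val = 3 ∨ i.val = 4 ∨ i.val = 2 * k + 5 then 1 else 0)
    else if j.val = 2 * k + 3 then (if i.val = 0 ∨ i.val = 1 ∨ i.val = 2 * k + 4 then 1 else 0)
    else if j.val = 4 * k + 3 then (if i.val = 1 ∨ i.val = 2 then 1 else 0)
    else (if i.val = j.val + 1 then 1 else 0)

/-- auxiliary: sum of a point-indicator over `Fin n`. -/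
lemma sum_ite_val {n : ℕ} (m : ℕ) (hm : m < n) (f : Fin n → ℝ) :
    (∑ j : Fin n, if (j : ℕ) = m then f j else 0) = f ⟨m, hm⟩ := by
  rw [Finset.sum_congr rfl
    (g := fun j => if j = (⟨m, hm⟩ : Fin n) then f j else 0)
    (fun j _ => by simp [Fin.ext_iff])]
  simp

/-- the explicit eigenvector. -/
def eigvec (k : ℕ) (lam X Y : ℝ) : Fin (4 * k + 4) → ℝ := fun i =>
  if (i : ℕ) = 0 then lam * X
  else if (i : ℕ) = 1 then lam * (X + Y)
  else if (i : ℕ) = 2 then Y * (lam - 1)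
  else if (i : ℕ) = 3 then Y
  else if (i : ℕ) < 2 * k + 4 then X * (lam - 1) * lam ^ (2 * k + 4 - (i : ℕ))
  else if (i : ℕ) = 2 * k + 4 then X * (lam + 1) + Y
  else Y * (lam - 1) * lam ^ (4 * k + 4 - (i : ℕ))

theorem Mk_has_eigenvalue_gt_one (k : ℕ) (hk : 1 ≤ k) :
    ∃ lam : ℝ, 1 < lam ∧
      (lam • (1 : Matrix (Fin (4 * k + 4)) (Fin (4 * k + 4)) ℝ) - Mk k).det = 0 := by
  -- Step 1: find a root lam ∈ (1,3] of  √t (t^{2k}(t-1) - 2) = t+1  by IVT.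
  obtain ⟨lam, hmem, hg⟩ : ∃ t ∈ Set.Icc (1 : ℝ) 3,
      Real.sqrt t * (t ^ (2 * k) * (t - 1) - 2) - (t + 1) = 0 := by
    set f : ℝ → ℝ := fun t => Real.sqrt t * (t ^ (2 * k) * (t - 1) - 2) - (t + 1) with hf
    have hc : ContinuousOn f (Set.Icc 1 3) := by fun_prop
    have h1 : f 1 = -4 := by simp [hf]; norm_num
    have h3 : (0 : ℝ) ≤ f 3 := by
      have h9 : (9 : ℝ) ≤ 3 ^ (2 * k) := by
        calc (9 : ℝ) = 3 ^ 2 := by norm_num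
        _ ≤ 3 ^ (2 * k) := by
            apply pow_le_pow_right₀ (by norm_num) (by omega)
      have hs : (1 : ℝ) ≤ Real.sqrt 3 := by
        rw [show (1 : ℝ) = Real.sqrt 1 from (Real.sqrt_one).symm]
        exact Real.sqrt_le_sqrt (by norm_num)
      have : (16 : ℝ) ≤ Real.sqrt 3 * (3 ^ (2 * k) * (3 - 1) - 2) := by nlinarith
      simp only [hf]
      linarith
    have hsub := intermediate_value_Icc (by norm_num : (1 : ℝ) ≤ 3) hc
    have h0 : (0 : ℝ) ∈ Set.Icc (f 1) (f 3) := by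
      constructor
      · rw [h1]; norm_num
      · exact h3
    obtain ⟨t, ht, h0⟩ := hsub h0
    exact ⟨t, ht, h0⟩
  have h0lam : (0 : ℝ) ≤ lam := le_trans zero_le_one hmem.1
  have hlam1 : 1 < lam := by
    rcases lt_or_eq_of_le hmem.1 with h | h
    · exact h
    · exfalso
      rw [← h] at hg
      simp at hg
      norm_num at hg
  -- Step 2: the key algebraic identity.
  have key : lam * (lam ^ (2 * k) * (lam - 1) - 2) ^ 2 = (lam + 1) ^ 2 := by
    have h : Real.sqrt lam * (lam ^ (2 * k) * (lam - 1) - 2) = lam + 1 := by linarith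
    calc lam * (lam ^ (2 * k) * (lam - 1) - 2) ^ 2
        = (Real.sqrt lam * (lam ^ (2 * k) * (lam - 1) - 2)) ^ 2 := by
          rw [mul_pow, Real.sq_sqrt h0lam]
    _ = (lam + 1) ^ 2 := by rw [h]
  set X : ℝ := lam + 1 with hX
  set Y : ℝ := lam * (lam ^ (2 * k) * (lam - 1) - 2) with hY
  set v : Fin (4 * k + 4) → ℝ := eigvec k lam X Y with hv
  -- v at the various special indices
  have e0 : ∀ h, v ⟨0, h⟩ = lam * X := by intro h; simp [hv, eigvec]
  have e1 : ∀ h, v ⟨1, h⟩ = lam * (X + Y) := by intro h; simp [hv, eigvec]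
  have e2 : ∀ h, v ⟨2, h⟩ = Y * (lam - 1) := by intro h; simp [hv, eigvec]
  have e3 : ∀ h, v ⟨3, h⟩ = Y := by intro h; simp [hv, eigvec]
  have ex : ∀ m, 4 ≤ m → m ≤ 2 * k + 3 → ∀ h, v ⟨m, h⟩ = X * (lam - 1) * lam ^ (2 * k + 4 - m) := by
    intro m h4 hm h
    simp only [hv, eigvec, Fin.val_mk]
    split_ifs <;> first | rfl | contradiction | (exfalso; omega)
  have ey0 : ∀ h, v ⟨2 * k + 4, h⟩ = X * (lam + 1) + Y := by
    intro h
    simp only [hv, eigvec, Fin.val_mk]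
    split_ifs <;> first | rfl | contradiction | (exfalso; omega)
  have ey : ∀ m, 2 * k + 5 ≤ m → m ≤ 4 * k + 3 → ∀ h,
      v ⟨m, h⟩ = Y * (lam - 1) * lam ^ (4 * k + 4 - m) := by
    intro m h5 hm h
    simp only [hv, eigvec, Fin.val_mk]
    split_ifs <;> first | rfl | contradiction | (exfalso; omega)
  -- Step 3: v is an eigenvector with eigenvalue lam.
  have hrow : ∀ i : Fin (4 * k + 4), (∑ j, Mk k i j * v j) = lam * v i := by
    intro i
    have hilt : (i : ℕ) < 4 * k + 4 := i.isLt
    have hvi : v i = v ⟨(i : ℕ), hilt⟩ := by congr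
    by_cases hi0 : (i : ℕ) = 0
    · -- row a
      have hkey : ∀ j : Fin (4 * k + 4), Mk k i j * v j =
          (if (j : ℕ) = 0 then v j else 0) + (if (j : ℕ) = 2 * k + 3 then v j else 0) := by
        intro j
        simp only [Mk]
        split_ifs <;> first | ring1 | contradiction | (exfalso; omega)
      rw [Finset.sum_congr rfl fun j _ => hkey j, Finset.sum_add_distrib,
        sum_ite_val 0 (by omega) v, sum_ite_val (2 * k + 3) (by omega) v,
        e0, ex (2 * k + 3) (by omega) (by omega), hvi]
      simp only [hi0]
      rw [e0, show 2 * k + 4 - (2 * k + 3) = 1 by omega]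
      ring
    · by_cases hi1 : (i : ℕ) = 1
      · -- row b
        have hkey : ∀ j : Fin (4 * k + 4), Mk k i j * v j =
            (if (j : ℕ) = 1 then v j else 0) + (if (j : ℕ) = 2 * k + 3 then v j else 0)
              + (if (j : ℕ) = 4 * k + 3 then v j else 0) := by
          intro j
          simp only [Mk]
          split_ifs <;> first | ring1 | contradiction | (exfalso; omega)
        rw [Finset.sum_congr rfl fun j _ => hkey j, Finset.sum_add_distrib,
          Finset.sum_add_distrib,
          sum_ite_val 1 (by omega) v, sum_ite_val (2 * k + 3) (by omega) v,
          sum_ite_val (4 * k + 3) (by omega) v,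
          e1, ex (2 * k + 3) (by omega) (by omega), ey (4 * k + 3) (by omega) (by omega), hvi]
        simp only [hi1]
        rw [e1, show 2 * k + 4 - (2 * k + 3) = 1 by omega,
          show 4 * k + 4 - (4 * k + 3) = 1 by omega]
        ring
      · by_cases hi2 : (i : ℕ) = 2
        · -- row c
          have hkey : ∀ j : Fin (4 * k + 4), Mk k i j * v j =
              (if (j : ℕ) = 4 * k + 3 then v j else 0) := by
            intro j
            simp only [Mk]
            split_ifs <;> first | ring1 | contradiction | (exfalso; omega)
          rw [Finset.sum_congr rfl fun j _ => hkey j,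
            sum_ite_val (4 * k + 3) (by omega) v,
            ey (4 * k + 3) (by omega) (by omega), hvi]
          simp only [hi2]
          rw [e2, show 4 * k + 4 - (4 * k + 3) = 1 by omega]
          ring
        · by_cases hi3 : (i : ℕ) = 3
          · -- row d
            have hkey : ∀ j : Fin (4 * k + 4), Mk k i j * v j =
                (if (j : ℕ) = 2 then v j else 0) + (if (j : ℕ) = 3 then v j else 0) := by
              intro j
              simp only [Mk]
              split_ifs <;> first | ring1 | contradiction | (exfalso; omega)
            rw [Finset.sum_congr rfl fun j _ => hkey j, Finset.sum_add_distrib,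
              sum_ite_val 2 (by omega) v, sum_ite_val 3 (by omega) v, e2, e3, hvi]
            simp only [hi3]
            rw [e3]
            ring
          · by_cases hi4 : (i : ℕ) = 4
            · -- row x₀ : needs the definitions of X and Y (identity E1)
              have hkey : ∀ j : Fin (4 * k + 4), Mk k i j * v j =
                  (if (j : ℕ) = 0 then v j else 0) + (if (j : ℕ) = 1 then v j else 0)
                    + (if (j : ℕ) = 3 then v j else 0) := by
                intro j
                simp only [Mk]
                split_ifs <;> first | ring1 | contradiction | (exfalso; omega)
              rw [Finset.sum_congr rfl fun j _ => hkey j, Finset.sum_add_distrib,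
                Finset.sum_add_distrib,
                sum_ite_val 0 (by omega) v, sum_ite_val 1 (by omega) v,
                sum_ite_val 3 (by omega) v, e0, e1, e3, hvi]
              simp only [hi4]
              rw [ex 4 (by omega) (by omega), show 2 * k + 4 - 4 = 2 * k by omega, hX, hY]
              ring
            · by_cases hix : (i : ℕ) ≤ 2 * k + 3
              · -- generic x row: 5 ≤ i ≤ 2k+3
                have hi5 : 5 ≤ (i : ℕ) := by omega
                have hkey : ∀ j : Fin (4 * k + 4), Mk k i j * v j =
                    (if (j : ℕ) = (i : ℕ) - 1 then v j else 0) := by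
                  intro j
                  simp only [Mk]
                  split_ifs <;> first | ring1 | contradiction | (exfalso; omega)
                rw [Finset.sum_congr rfl fun j _ => hkey j,
                  sum_ite_val ((i : ℕ) - 1) (by omega) v,
                  ex ((i : ℕ) - 1) (by omega) (by omega), hvi,
                  ex (i : ℕ) (by omega) (by omega),
                  show 2 * k + 4 - ((i : ℕ) - 1) = (2 * k + 4 - (i : ℕ)) + 1 by omega,
                  pow_succ]
                ring
              · by_cases hiy0 : (i : ℕ) = 2 * k + 4
                · -- row y₀
                  have hkey : ∀ j : Fin (4 * k + 4), Mk k i j * v j =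
                      (if (j : ℕ) = 0 then v j else 0) + (if (j : ℕ) = 1 then v j else 0)
                        + (if (j : ℕ) = 2 * k + 3 then v j else 0) := by
                    intro j
                    simp only [Mk]
                    split_ifs <;> first | ring1 | contradiction | (exfalso; omega)
                  rw [Finset.sum_congr rfl fun j _ => hkey j, Finset.sum_add_distrib,
                    Finset.sum_add_distrib,
                    sum_ite_val 0 (by omega) v, sum_ite_val 1 (by omega) v,
                    sum_ite_val (2 * k + 3) (by omega) v,
                    e0, e1, ex (2 * k + 3) (by omega) (by omega), hvi]
                  simp only [hiy0]
                  rw [ey0, show 2 * k + 4 - (2 * k + 3) = 1 by omega]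
                  ring
                · by_cases hiy1 : (i : ℕ) = 2 * k + 5
                  · -- row y₁ : this uses the key identity
                    have hkey : ∀ j : Fin (4 * k + 4), Mk k i j * v j =
                        (if (j : ℕ) = 3 then v j else 0)
                          + (if (j : ℕ) = 2 * k + 4 then v j else 0) := by
                      intro j
                      simp only [Mk]
                      split_ifs <;> first | ring1 | contradiction | (exfalso; omega)
                    rw [Finset.sum_congr rfl fun j _ => hkey j, Finset.sum_add_distrib,
                      sum_ite_val 3 (by omega) v, sum_ite_val (2 * k + 4) (by omega) v,
                      e3, ey0, hvi]
                    simp only [hiy1]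
                    rw [ey (2 * k + 5) (by omega) (by omega),
                      show 4 * k + 4 - (2 * k + 5) = 2 * k - 1 by omega]
                    obtain ⟨m, hm⟩ : ∃ m, 2 * k = m + 1 := ⟨2 * k - 1, by omega⟩
                    have key2 : lam * (lam ^ m * lam * (lam - 1) - 2) ^ 2 = (lam + 1) ^ 2 := by
                      rw [← pow_succ, ← hm, ← hX]
                      exact key
                    rw [show 2 * k - 1 = m by omega, hX, hY, hm]
                    simp only [pow_succ]
                    linear_combination -key2
                  · -- generic y row: 2k+6 ≤ i ≤ 4k+3
                    have hi6 : 2 * k + 6 ≤ (i : ℕ) := by omega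
                    have hkey : ∀ j : Fin (4 * k + 4), Mk k i j * v j =
                        (if (j : ℕ) = (i : ℕ) - 1 then v j else 0) := by
                      intro j
                      simp only [Mk]
                      split_ifs <;> first | ring1 | contradiction | (exfalso; omega)
                    rw [Finset.sum_congr rfl fun j _ => hkey j,
                      sum_ite_val ((i : ℕ) - 1) (by omega) v,
                      ey ((i : ℕ) - 1) (by omega) (by omega), hvi,
                      ey (i : ℕ) (by omega) (by omega),
                      show 4 * k + 4 - ((i : ℕ) - 1) = (4 * k + 4 - (i : ℕ)) + 1 by omega,
                      pow_succ]
                    ring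
  -- Step 4: conclude.
  refine ⟨lam, hlam1, ?_⟩
  rw [← Matrix.exists_mulVec_eq_zero_iff]
  refine ⟨v, ?_, ?_⟩
  · intro h
    have h0 := congrFun h ⟨0, by omega⟩
    rw [e0] at h0
    simp only [Pi.zero_apply] at h0
    nlinarith
  · funext i
    rw [Matrix.sub_mulVec, Matrix.smul_mulVec, Matrix.one_mulVec]
    simp only [Pi.sub_apply, Pi.smul_apply, smul_eq_mul, Pi.zero_apply]
    have : Matrix.mulVec (Mk k) v i = ∑ j, Mk k i j * v j := rfl
    rw [this, hrow i]
    ring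
end

section
/- For each integer k ≥ 1, every real root of the characteristic polynomial det(X·I − M_k) that is strictly greater than 1 is a root of p_k(X) = X^(4k+2) − X^(4k+1) − 4·X^(2k+1) − X + 1, and conversely every real root of p_k greater than 1 is a root of the characteristic polynomial of M_k. -/
open Matrix Finset

theorem eval_charpoly_eq_zero_iff_exists_vecMul_eq_smul {n K : Type*} [Fintype n] [DecidableEq n]
    [Field K] (M : Matrix n n K) (μ : K) :
    M.charpoly.eval μ = 0 ↔ ∃ v ≠ 0, v ᵥ* M = μ • v := by
  simp only [eval_charpoly, ← exists_vecMul_eq_zero_iff, vecMul_sub, sub_eq_zero,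
    eq_comm (a := _ ᵥ* M)]
  simp [scalar_apply, funext_iff]

theorem vecMul_apply_eq_sum_of_col {R : Type*} [NonAssocSemiring R] {N : ℕ} (f : ℕ → R)
    (M : Matrix (Fin N) (Fin N) R) (j : Fin N)
    (S : Finset ℕ) (hcol : ∀ i : Fin N, M i j = if (i : ℕ) ∈ S then 1 else 0)
    (hS : ∀ n ∈ S, n < N) :
    ((fun i : Fin N => f i) ᵥ* M) j = ∑ n ∈ S, f n := by
  simp only [vecMul, dotProduct, hcol, mul_ite, mul_one, mul_zero]
  rw [Fin.sum_univ_eq_sum_range (fun i => if i ∈ S then f i else 0), sum_ite_mem,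
    inter_eq_right.2 fun n hn => mem_range.2 (hS n hn)]

theorem sum_triple {M : Type*} [AddCommMonoid M] {a b c : ℕ} (f : ℕ → M) (hab : a ≠ b)
    (hac : a ≠ c) (hbc : b ≠ c) : ∑ n ∈ {a, b, c}, f n = f a + f b + f c := by
  rw [sum_insert (by simp [hab, hac]), sum_pair hbc, add_assoc]

theorem apply_add_eq_pow_mul {M : Type*} [Monoid M] {f : ℕ → M} {c : M} {a m : ℕ}
    (h : ∀ i, i + 1 < m → f (a + i + 1) = c * f (a + i)) : ∀ i < m, f (a + i) = c ^ i * f a := by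
  intro i
  induction i with
  | zero => simp
  | succ i ih =>
    intro hi
    rw [← add_assoc, h i hi, ih (by omega), pow_succ', mul_assoc]

namespace Mk

variable {k : ℕ} {lam : ℝ}

theorem vecMul_apply (hk : 1 ≤ k) (f : ℕ → ℝ) (j : Fin (4 * k + 4)) :
    ((fun i : Fin (4 * k + 4) => f i) ᵥ* Mk k) j =
      if (j : ℕ) = 0 then f 0 + f 4 + f (2 * k + 4)
      else if (j : ℕ) = 1 then f 1 + f 4 + f (2 * k + 4)
      else if (j : ℕ) = 2 then f 3
      else if (j : ℕ) = 3 then f 3 + f 4 + f (2 * k + 5)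
      else if (j : ℕ) = 2 * k + 3 then f 0 + f 1 + f (2 * k + 4)
      else if (j : ℕ) = 4 * k + 3 then f 1 + f 2
      else f (j + 1) := by
  have hj := j.isLt
  have hk0 : k ≠ 0 := by omega
  split_ifs
  · rw [vecMul_apply_eq_sum_of_col f _ j {0, 4, 2 * k + 4} (fun i => by simp [Mk, *])
      (by intro n hn; simp at hn; omega), sum_triple f (by omega) (by omega) (by omega)]
  · rw [vecMul_apply_eq_sum_of_col f _ j {1, 4, 2 * k + 4} (fun i => by simp [Mk, *])
      (by intro n hn; simp at hn; omega), sum_triple f (by omega) (by omega) (by omega)]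
  · rw [vecMul_apply_eq_sum_of_col f _ j {3} (fun i => by simp [Mk, *])
      (by intro n hn; simp at hn; omega), sum_singleton]
  · rw [vecMul_apply_eq_sum_of_col f _ j {3, 4, 2 * k + 5} (fun i => by simp [Mk, *])
      (by intro n hn; simp at hn; omega), sum_triple f (by omega) (by omega) (by omega)]
  · rw [vecMul_apply_eq_sum_of_col f _ j {0, 1, 2 * k + 4} (fun i => by simp [Mk, *])
      (by intro n hn; simp at hn; omega), sum_triple f (by omega) (by omega) (by omega)]
  · rw [vecMul_apply_eq_sum_of_col f _ j {1, 2} (fun i => by simp [Mk, *])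
      (by intro n hn; simp at hn; omega), sum_pair (by omega)]
  · rw [vecMul_apply_eq_sum_of_col f _ j {(j : ℕ) + 1} (fun i => by simp [Mk, *])
      (by intro n hn; simp at hn; omega), sum_singleton]

/-- Indexed as `Mk`; `P` and `Q` are the entries at `x₀` and `y₀`. -/
noncomputable def leftEigvec (k : ℕ) (lam P Q : ℝ) (n : ℕ) : ℝ :=
  if n < 2 then (P + Q) / (lam - 1)
  else if n = 2 then (P + lam * Q) / (lam * (lam - 1))
  else if n = 3 then (P + lam * Q) / (lam - 1)
  else if n < 2 * k + 4 then lam ^ (n - 4) * P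
  else lam ^ (n - (2 * k + 4)) * Q

theorem leftEigvec_zero_zero : leftEigvec k lam 0 0 = 0 := by
  ext n; simp [leftEigvec]

theorem leftEigvec_four (hk : 1 ≤ k) (P Q : ℝ) : leftEigvec k lam P Q 4 = P := by
  simp (disch := omega) [leftEigvec, if_pos]

theorem leftEigvec_two_mul_add_four (P Q : ℝ) : leftEigvec k lam P Q (2 * k + 4) = Q := by
  simp (disch := omega) [leftEigvec]

def reducedMatrix (k : ℕ) (lam : ℝ) : Matrix (Fin 2) (Fin 2) ℝ :=
  !![lam ^ (2 * k) * (lam - 1) - 2, -(lam + 1);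
    -(lam + 1), lam ^ (2 * k + 1) * (lam - 1) - 2 * lam]

theorem reducedMatrix_mulVec_eq_zero_iff (P Q : ℝ) :
    reducedMatrix k lam *ᵥ ![P, Q] = 0 ↔
      (lam ^ (2 * k) * (lam - 1) - 2) * P = (lam + 1) * Q ∧
        (lam ^ (2 * k + 1) * (lam - 1) - 2 * lam) * Q = (lam + 1) * P := by
  simp [reducedMatrix, funext_iff, Fin.forall_fin_two, vecHead, vecTail]
  constructor <;> rintro ⟨h1, h2⟩ <;> constructor <;> linarith

theorem det_reducedMatrix :
    (reducedMatrix k lam).det =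
      (lam - 1) * (lam ^ (4 * k + 2) - lam ^ (4 * k + 1) - 4 * lam ^ (2 * k + 1) - lam + 1) := by
  rw [reducedMatrix, det_fin_two_of]
  ring

theorem eq_leftEigvec_of_vecMul_eq_smul (hk : 1 ≤ k) (hlam0 : lam ≠ 0) (hlam1 : lam ≠ 1)
    {f : ℕ → ℝ}
    (hf : (fun i : Fin (4 * k + 4) => f i) ᵥ* Mk k = lam • fun i : Fin (4 * k + 4) => f i) :
    (∀ n < 4 * k + 4, f n = leftEigvec k lam (f 4) (f (2 * k + 4)) n) ∧
      reducedMatrix k lam *ᵥ ![f 4, f (2 * k + 4)] = 0 := by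
  have col : ∀ j (hj : j < 4 * k + 4),
      lam * f j = ((fun i : Fin (4 * k + 4) => f i) ᵥ* Mk k) ⟨j, hj⟩ := fun j hj => by
    rw [hf]; rfl
  have ha := col 0 (by omega)
  have hb := col 1 (by omega)
  have hc := col 2 (by omega)
  have hd := col 3 (by omega)
  have hxe := col (2 * k + 3) (by omega)
  have hye := col (4 * k + 3) (by omega)
  simp (disch := omega) only [vecMul_apply hk, if_true, if_neg] at ha hb hc hd hxe hye
  have hx : ∀ i < 2 * k, f (4 + i) = lam ^ i * f 4 := apply_add_eq_pow_mul fun i hi => by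
    have := col (4 + i) (by omega)
    simp (disch := omega) only [vecMul_apply hk, if_neg] at this
    exact this.symm
  have hy : ∀ i < 2 * k, f (2 * k + 4 + i) = lam ^ i * f (2 * k + 4) :=
    apply_add_eq_pow_mul fun i hi => by
      have := col (2 * k + 4 + i) (by omega)
      simp (disch := omega) only [vecMul_apply hk, if_neg] at this
      exact this.symm
  set P := f 4
  set Q := f (2 * k + 4)
  have hP : f (2 * k + 3) = lam ^ (2 * k - 1) * P := by
    rw [← hx (2 * k - 1) (by omega)]; congr 1; omega
  have hQ : f (4 * k + 3) = lam ^ (2 * k - 1) * Q := by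
    rw [← hy (2 * k - 1) (by omega)]; congr 1; omega
  have hQ1 : f (2 * k + 5) = lam * Q := by simpa using hy 1 (by omega)
  have hpow : lam * lam ^ (2 * k - 1) = lam ^ (2 * k) := by
    rw [← pow_succ']; congr 1; omega
  have hsub : lam - 1 ≠ 0 := sub_ne_zero.2 hlam1
  have h0 : (lam - 1) * f 0 = P + Q := by linarith
  have h1 : (lam - 1) * f 1 = P + Q := by linarith
  have h3 : (lam - 1) * f 3 = P + lam * Q := by linarith
  refine ⟨fun n hn => ?_, ?_⟩
  · unfold leftEigvec
    split_ifs with hn2 hn2' hn3 hn4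
    · rw [eq_div_iff hsub]; interval_cases n <;> linarith
    · rw [hn2', eq_div_iff (mul_ne_zero hlam0 hsub)]; linear_combination (lam - 1) * hc + h3
    · rw [hn3, eq_div_iff hsub]; linarith
    · rw [← hx (n - 4) (by omega)]; congr 1; omega
    · rw [← hy (n - (2 * k + 4)) (by omega)]; congr 1; omega
  · rw [reducedMatrix_mulVec_eq_zero_iff]
    rw [hP, ← mul_assoc, hpow] at hxe
    rw [hQ, ← mul_assoc, hpow] at hye
    constructor
    · linear_combination (lam - 1) * hxe + h0 + h1
    · linear_combination lam * (lam - 1) * hye + lam * h1 + (lam - 1) * hc + h3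

theorem vecMul_leftEigvec (hk : 1 ≤ k) (hlam0 : lam ≠ 0) (hlam1 : lam ≠ 1) {P Q : ℝ}
    (hPQ : reducedMatrix k lam *ᵥ ![P, Q] = 0) :
    (fun i : Fin (4 * k + 4) => leftEigvec k lam P Q i) ᵥ* Mk k =
      lam • fun i : Fin (4 * k + 4) => leftEigvec k lam P Q i := by
  obtain ⟨hxe, hye⟩ := (reducedMatrix_mulVec_eq_zero_iff P Q).1 hPQ
  have hsub : lam - 1 ≠ 0 := sub_ne_zero.2 hlam1
  ext ⟨j, hj⟩
  rw [vecMul_apply hk, Pi.smul_apply, smul_eq_mul]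
  dsimp only
  have hpow : lam ^ (2 * k) = lam * lam ^ (2 * k - 1) := by
    rw [← pow_succ']; congr 1; omega
  split_ifs with h0 h1 h2 h3 hx hy <;> subst_vars <;>
    simp (disch := omega) only [leftEigvec, if_pos, if_neg, if_true, Nat.sub_self, pow_zero,
      one_mul]
  · field_simp; ring
  · field_simp; ring
  · field_simp
  · rw [show 2 * k + 5 - (2 * k + 4) = 1 by omega]
    field_simp; ring
  · rw [show 2 * k + 3 - 4 = 2 * k - 1 by omega, ← mul_assoc, ← hpow]
    field_simp
    linear_combination -hxe
  · rw [show 4 * k + 3 - (2 * k + 4) = 2 * k - 1 by omega, ← mul_assoc, ← hpow]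
    field_simp
    linear_combination -hye
  · split_ifs
    · rw [show j + 1 - 4 = j - 4 + 1 by omega, pow_succ']; ring
    · omega
    · omega
    · rw [show j + 1 - (2 * k + 4) = j - (2 * k + 4) + 1 by omega, pow_succ']; ring

theorem exists_vecMul_eq_smul_iff (hk : 1 ≤ k) (hlam0 : lam ≠ 0) (hlam1 : lam ≠ 1) :
    (∃ v ≠ 0, v ᵥ* Mk k = lam • v) ↔ ∃ u ≠ 0, reducedMatrix k lam *ᵥ u = 0 := by
  constructor
  · rintro ⟨v, hv0, hv⟩
    set f : ℕ → ℝ := fun n => if h : n < 4 * k + 4 then v ⟨n, h⟩ else 0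
    have hvf : v = fun i : Fin (4 * k + 4) => f i := funext fun i => by simp [f]
    rw [hvf] at hv hv0
    obtain ⟨hf, hPQ⟩ := eq_leftEigvec_of_vecMul_eq_smul hk hlam0 hlam1 hv
    refine ⟨![f 4, f (2 * k + 4)], fun h0 => hv0 ?_, hPQ⟩
    have hP : f 4 = 0 := congrFun h0 0
    have hQ : f (2 * k + 4) = 0 := congrFun h0 1
    ext i
    rw [hf i i.isLt, hP, hQ, leftEigvec_zero_zero, Pi.zero_apply, Pi.zero_apply]
  · rintro ⟨u, hu0, hu⟩
    have hu' : u = ![u 0, u 1] := by ext i; fin_cases i <;> rfl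
    rw [hu'] at hu hu0
    refine ⟨fun i => leftEigvec k lam (u 0) (u 1) i, fun h0 => hu0 ?_,
      vecMul_leftEigvec hk hlam0 hlam1 hu⟩
    have hP := congrFun h0 ⟨4, by omega⟩
    have hQ := congrFun h0 ⟨2 * k + 4, by omega⟩
    simp only [leftEigvec_four hk, leftEigvec_two_mul_add_four, Pi.zero_apply] at hP hQ
    rw [hP, hQ]
    ext i; fin_cases i <;> rfl

end Mk

theorem Mk_charpoly_roots_gt_one (k : ℕ) (hk : 1 ≤ k) (lam : ℝ) (hlam : 1 < lam) :
    (Mk k).charpoly.eval lam = 0 ↔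
      lam ^ (4 * k + 2) - lam ^ (4 * k + 1) - 4 * lam ^ (2 * k + 1) - lam + 1 = 0 := by
  rw [eval_charpoly_eq_zero_iff_exists_vecMul_eq_smul,
    Mk.exists_vecMul_eq_smul_iff hk (zero_lt_one.trans hlam).ne' hlam.ne',
    exists_mulVec_eq_zero_iff, Mk.det_reducedMatrix, mul_eq_zero,
    or_iff_right (sub_ne_zero.2 hlam.ne')]
end
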